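/- arXiv:2208.09190 — 7 statements merged into one kernel-verified Lean document; each statement's English description precedes it below -/
import Mathlib

section
/- Let ι be a nonempty finite index set, let a : ι → ℝ with a j > 0 (sequential times), v : ι → ℝ with v j ≥ 0 (remote data volumes), and let B > 0 (bandwidth per node), n > 0 (number of nodes of the allocation), C > 0 (cores per node), T > 0. Suppose c : ι → ℝ satisfies c j > 0 for all j, ∑ j, c j = C, and for every j: a j / (n * c j) + v j / (B * n) = T. Then T = (B * (∑ j, a j) + ∑ j, c j * v j) / (B * C * n). -/
open Finset

theorem mul_add_mul_eq_of_div_add_div_eq {K : Type*} [Field K] {a v B n c T : K}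
    (hB : B ≠ 0) (hn : n ≠ 0) (hc : c ≠ 0) (h : a / (n * c) + v / (B * n) = T) :
    B * a + c * v = c * (B * n * T) := by
  rw [← h]
  field_simp

theorem coSched_equalized_allocation_time_general
    {ι : Type*} [Fintype ι]
    (a v : ι → ℝ)
    (B n C T : ℝ) (hB : 0 < B) (hn : 0 < n) (hC : 0 < C)
    (c : ι → ℝ) (hc : ∀ j, 0 < c j) (hsum : (∑ j, c j) = C)
    (heq : ∀ j, a j / (n * c j) + v j / (B * n) = T) :
    T = (B * (∑ j, a j) + ∑ j, c j * v j) / (B * C * n) := by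
  have per_job (j : ι) : B * a j + c j * v j = c j * (B * n * T) :=
    mul_add_mul_eq_of_div_add_div_eq hB.ne' hn.ne' (hc j).ne' (heq j)
  have total : B * (∑ j, a j) + ∑ j, c j * v j = C * (B * n * T) := by
    rw [mul_sum, ← sum_add_distrib, ← hsum, sum_mul]
    exact sum_congr rfl fun j _ => per_job j
  rw [eq_div_iff (by positivity), total]
  ring

/-- Lemma (Eq. (8)): if all jobs co-scheduled on an allocation of `n` nodes with per-node
core counts `c j` summing to `C` have the same per-iteration time `T`, then
`T = (B * ∑ a j + ∑ c j * v j) / (B * C * n)`. -/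
theorem coSched_equalized_allocation_time
    {ι : Type*} [Fintype ι] [Nonempty ι]
    (a v : ι → ℝ) (ha : ∀ j, 0 < a j) (hv : ∀ j, 0 ≤ v j)
    (B n C T : ℝ) (hB : 0 < B) (hn : 0 < n) (hC : 0 < C) (hT : 0 < T)
    (c : ι → ℝ) (hc : ∀ j, 0 < c j) (hsum : (∑ j, c j) = C)
    (heq : ∀ j, a j / (n * c j) + v j / (B * n) = T) :
    T = (B * (∑ j, a j) + ∑ j, c j * v j) / (B * C * n) :=
  coSched_equalized_allocation_time_general a v B n C T hB hn hC c hc hsum heq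
end

section
/- Let ι be a nonempty finite index set, a j > 0, v j ≥ 0 for j ∈ ι, and B > 0, n > 0, C > 0, T > 0. Suppose c : ι → ℝ satisfies c j > 0, ∑ j, c j = C, and a j / (n * c j) + v j / (B * n) = T for every j (an equalized allocation). Then for every other allocation c' : ι → ℝ with c' j > 0 for all j and ∑ j, c' j ≤ C, one has max_j (a j / (n * c' j) + v j / (B * n)) ≥ T. In other words, the equalized allocation minimizes the maximum per-iteration time over all core allocations respecting the budget C. -/
open Finset Set

/-- Some job gets no more under `c'` than under `c`; on that job `c'` is at least as slow. -/
theorem le_sup'_of_sum_le_of_antitoneOn {ι M α : Type*} [Fintype ι] [Nonempty ι]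
    [AddCommMonoid M] [LinearOrder M] [IsOrderedCancelAddMonoid M] [SemilatticeSup α]
    {s : Set M} {f : ι → M → α} (hf : ∀ j, AntitoneOn (f j) s) {c c' : ι → M}
    (hc : ∀ j, c j ∈ s) (hc' : ∀ j, c' j ∈ s) (hsum : ∑ j, c' j ≤ ∑ j, c j)
    {T : α} (hT : ∀ j, T ≤ f j (c j)) :
    T ≤ univ.sup' univ_nonempty fun j => f j (c' j) := by
  obtain ⟨j, hj, hle⟩ := exists_le_of_sum_le univ_nonempty hsum
  exact le_sup'_of_le _ hj ((hT j).trans (hf j (hc' j) (hc j) hle))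

theorem antitoneOn_div_mul_add {a n : ℝ} (ha : 0 ≤ a) (hn : 0 < n) (w : ℝ) :
    AntitoneOn (fun x => a / (n * x) + w) (Ioi 0) := by
  intro x hx y _ hxy
  have hnx : 0 < n * x := mul_pos hn hx
  dsimp only
  gcongr

theorem coSched_equalized_allocation_minimizes_max_general
    {ι : Type*} [Fintype ι] [Nonempty ι]
    (a v : ι → ℝ) (ha : ∀ j, 0 < a j)
    (B n C T : ℝ) (hn : 0 < n)
    (c : ι → ℝ) (hc : ∀ j, 0 < c j) (hsum : (∑ j, c j) = C)
    (heq : ∀ j, a j / (n * c j) + v j / (B * n) = T) :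
    ∀ c' : ι → ℝ, (∀ j, 0 < c' j) → (∑ j, c' j) ≤ C →
      T ≤ Finset.univ.sup' Finset.univ_nonempty
        (fun j => a j / (n * c' j) + v j / (B * n)) := by
  intro c' hc' hsum'
  exact le_sup'_of_sum_le_of_antitoneOn (f := fun j x => a j / (n * x) + v j / (B * n))
    (fun j => antitoneOn_div_mul_add (ha j).le hn _) hc hc' (hsum'.trans hsum.ge)
    fun j => (heq j).ge

/-- Optimality of the equalized allocation: if `c` equalizes the per-iteration times of
all jobs of an allocation at value `T` using the full core budget `C`, then any other
core allocation `c'` respecting the budget has maximum per-iteration time at least `T`. -/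
theorem coSched_equalized_allocation_minimizes_max
    {ι : Type*} [Fintype ι] [Nonempty ι]
    (a v : ι → ℝ) (ha : ∀ j, 0 < a j) (hv : ∀ j, 0 ≤ v j)
    (B n C T : ℝ) (hB : 0 < B) (hn : 0 < n) (hC : 0 < C) (hT : 0 < T)
    (c : ι → ℝ) (hc : ∀ j, 0 < c j) (hsum : (∑ j, c j) = C)
    (heq : ∀ j, a j / (n * c j) + v j / (B * n) = T) :
    ∀ c' : ι → ℝ, (∀ j, 0 < c' j) → (∑ j, c' j) ≤ C →
      T ≤ Finset.univ.sup' Finset.univ_nonempty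
        (fun j => a j / (n * c' j) + v j / (B * n)) :=
  coSched_equalized_allocation_minimizes_max_general a v ha B n C T hn c hc hsum heq
end

section
/- Let ι be a nonempty finite index set of jobs with sequential times a x > 0, and let B > 0, N > 0, C > 0. Consider any resource assignment n x > 0 (nodes) and c x > 0 (cores per node) satisfying the total budget ∑ x, n x * c x ≤ N * C, and remote data volumes v x ≥ 0, with per-iteration times t x = a x / (n x * c x) + v x / (B * n x). Then max_x t x ≥ (∑ x, a x) / (N * C). Moreover, if v k > 0 for some job k, then the inequality is strict: max_x t x > (∑ x, a x) / (N * C). -/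
/-! A job of work `a x` run on `w x = n x * c x` cores needs time at least `a x / w x`, with
equality exactly when no remote data is fetched. So if `M` bounds every job's time then
`a x ≤ M * w x`, and summing over the jobs under the core budget gives `∑ a ≤ M * N * C`;
one job with remote data makes its inequality, hence the sum, strict. -/

open Finset

section IdealBound

variable {ι : Type*} {s : Finset ι} {a w : ι → ℝ} {M T : ℝ}

theorem sum_le_mul_of_le_mul (hM : 0 ≤ M) (hT : ∑ x ∈ s, w x ≤ T)
    (h : ∀ x ∈ s, a x ≤ M * w x) : ∑ x ∈ s, a x ≤ M * T :=
  calc ∑ x ∈ s, a x ≤ ∑ x ∈ s, M * w x := sum_le_sum h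
    _ = M * ∑ x ∈ s, w x := (mul_sum s w M).symm
    _ ≤ M * T := mul_le_mul_of_nonneg_left hT hM

theorem sum_lt_mul_of_le_mul (hM : 0 ≤ M) (hT : ∑ x ∈ s, w x ≤ T)
    (h : ∀ x ∈ s, a x ≤ M * w x) (hk : ∃ k ∈ s, a k < M * w k) :
    ∑ x ∈ s, a x < M * T :=
  calc ∑ x ∈ s, a x < ∑ x ∈ s, M * w x := sum_lt_sum h hk
    _ = M * ∑ x ∈ s, w x := (mul_sum s w M).symm
    _ ≤ M * T := mul_le_mul_of_nonneg_left hT hM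

variable {t : ι → ℝ} (hs : s.Nonempty)

theorem le_sup'_mul_of_div_le (hw : ∀ x ∈ s, 0 < w x) (ht : ∀ x ∈ s, a x / w x ≤ t x) :
    ∀ x ∈ s, a x ≤ s.sup' hs t * w x := fun x hx =>
  (div_le_iff₀ (hw x hx)).1 ((ht x hx).trans (le_sup' t hx))

theorem sup'_nonneg_of_div_le (ha : ∀ x ∈ s, 0 ≤ a x) (hw : ∀ x ∈ s, 0 < w x)
    (ht : ∀ x ∈ s, a x / w x ≤ t x) : 0 ≤ s.sup' hs t := by
  obtain ⟨x, hx⟩ := hs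
  exact (div_nonneg (ha x hx) (hw x hx).le).trans ((ht x hx).trans (le_sup' t hx))

theorem sum_div_le_sup'_of_div_le (ha : ∀ x ∈ s, 0 ≤ a x) (hw : ∀ x ∈ s, 0 < w x)
    (hT : ∑ x ∈ s, w x ≤ T) (ht : ∀ x ∈ s, a x / w x ≤ t x) :
    (∑ x ∈ s, a x) / T ≤ s.sup' hs t := by
  have hT₀ : 0 < T := (sum_pos hw hs).trans_le hT
  rw [div_le_iff₀ hT₀]
  exact sum_le_mul_of_le_mul (sup'_nonneg_of_div_le hs ha hw ht) hT
    (le_sup'_mul_of_div_le hs hw ht)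

theorem sum_div_lt_sup'_of_div_lt (ha : ∀ x ∈ s, 0 ≤ a x) (hw : ∀ x ∈ s, 0 < w x)
    (hT : ∑ x ∈ s, w x ≤ T) (ht : ∀ x ∈ s, a x / w x ≤ t x)
    {k : ι} (hk : k ∈ s) (htk : a k / w k < t k) :
    (∑ x ∈ s, a x) / T < s.sup' hs t := by
  have hT₀ : 0 < T := (sum_pos hw hs).trans_le hT
  rw [div_lt_iff₀ hT₀]
  exact sum_lt_mul_of_le_mul (sup'_nonneg_of_div_le hs ha hw ht) hT
    (le_sup'_mul_of_div_le hs hw ht)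
    ⟨k, hk, (div_lt_iff₀ (hw k hk)).1 (htk.trans_le (le_sup' t hk))⟩

end IdealBound

theorem coSched_ideal_lower_bound_general
    {ι : Type*} [Fintype ι] [Nonempty ι]
    (a v n c : ι → ℝ) (ha : ∀ x, 0 < a x) (hv : ∀ x, 0 ≤ v x)
    (hn : ∀ x, 0 < n x) (hc : ∀ x, 0 < c x)
    (B N C : ℝ) (hB : 0 < B)
    (hbudget : (∑ x, n x * c x) ≤ N * C)
    (t : ι → ℝ) (ht : ∀ x, t x = a x / (n x * c x) + v x / (B * n x)) :
    (∑ x, a x) / (N * C) ≤ Finset.univ.sup' Finset.univ_nonempty t ∧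
    (∀ k, 0 < v k →
      (∑ x, a x) / (N * C) < Finset.univ.sup' Finset.univ_nonempty t) := by
  have ha₀ : ∀ x ∈ univ, 0 ≤ a x := fun x _ => (ha x).le
  have hw : ∀ x ∈ univ, 0 < n x * c x := fun x _ => mul_pos (hn x) (hc x)
  have hcompute : ∀ x ∈ univ, a x / (n x * c x) ≤ t x := fun x _ => by
    rw [ht x]
    exact le_add_of_nonneg_right (div_nonneg (hv x) (mul_pos hB (hn x)).le)
  refine ⟨sum_div_le_sup'_of_div_le univ_nonempty ha₀ hw hbudget hcompute, fun k hk => ?_⟩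
  have hremote : a k / (n k * c k) < t k := by
    rw [ht k]
    exact lt_add_of_pos_right _ (div_pos hk (mul_pos hB (hn k)))
  exact sum_div_lt_sup'_of_div_lt univ_nonempty ha₀ hw hbudget hcompute (mem_univ k) hremote

/-- Core of Theorem 1: under the total budget `∑ n x * c x ≤ N * C`, the maximum
per-iteration time is at least `(∑ a x) / (N * C)`, and strictly larger as soon as some
job `k` has a positive remote data volume `v k > 0`. -/
theorem coSched_ideal_lower_bound
    {ι : Type*} [Fintype ι] [Nonempty ι]
    (a v n c : ι → ℝ) (ha : ∀ x, 0 < a x) (hv : ∀ x, 0 ≤ v x)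
    (hn : ∀ x, 0 < n x) (hc : ∀ x, 0 < c x)
    (B N C : ℝ) (hB : 0 < B) (hN : 0 < N) (hC : 0 < C)
    (hbudget : (∑ x, n x * c x) ≤ N * C)
    (t : ι → ℝ) (ht : ∀ x, t x = a x / (n x * c x) + v x / (B * n x)) :
    (∑ x, a x) / (N * C) ≤ Finset.univ.sup' Finset.univ_nonempty t ∧
    (∀ k, 0 < v k →
      (∑ x, a x) / (N * C) < Finset.univ.sup' Finset.univ_nonempty t) :=
  coSched_ideal_lower_bound_general a v n c ha hv hn hc B N C hB hbudget t ht
end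

section
/- Let N > 0, B > 0, C > 0, t* > 0 be real numbers, and let n*, n', s be real numbers with n' > s > 0 and n* + s > n'. Let U*, U', R be real numbers satisfying R = (t* * B * C + (U' − U*) / N) * s and U' − U* = (N / n') * (t* * B * C * (n* − n') + R). Then (U' − U*) * (n' − s) = N * t* * B * C * (n* + s − n'), and consequently U' > U*. -/
/-! Substituting the helper identity into the difference identity and clearing the denominators
`N` and `n'` leaves a linear equation `(U' - U*) * (n' - s) = N t* B C (n* + s - n')` for the cost
difference. Both `n' - s` and the right-hand side are positive, so `U' - U*` is positive. -/

theorem mul_sub_eq_of_eq_div_mul {K : Type*} [Field K] (N T nstar n' s D R : K)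
    (hN : N ≠ 0) (hn' : n' ≠ 0) (hR : R = (T + D / N) * s)
    (hdiff : D = N / n' * (T * (nstar - n') + R)) :
    D * (n' - s) = N * T * (nstar + s - n') := by
  subst hR
  field_simp at hdiff
  linear_combination hdiff

/-- Algebraic core of the proof of Theorem 2: from the helper identity (Eq. (27)) and the
difference identity (Eq. (26)) one obtains Eq. (28),
`(U' − U*) * (n' − s) = N * t* * B * C * (n* + s − n')`, and consequently `U' > U*`. -/
theorem coSched_analysisOnly_strictly_better
    (N B C tstar nstar n' s Ustar U' R : ℝ)
    (hN : 0 < N) (hB : 0 < B) (hC : 0 < C) (htstar : 0 < tstar)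
    (hs : 0 < s) (hsn : s < n') (hnn : n' < nstar + s)
    (hR : R = (tstar * B * C + (U' - Ustar) / N) * s)
    (hdiff : U' - Ustar = (N / n') * (tstar * B * C * (nstar - n') + R)) :
    (U' - Ustar) * (n' - s) = N * tstar * B * C * (nstar + s - n') ∧ Ustar < U' := by
  have eq28 : (U' - Ustar) * (n' - s) = N * tstar * B * C * (nstar + s - n') := by
    linear_combination
      mul_sub_eq_of_eq_div_mul N (tstar * B * C) nstar n' s _ R hN.ne' (hs.trans hsn).ne' hR hdiff
  have rhs_pos : 0 < N * tstar * B * C * (nstar + s - n') := by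
    have := sub_pos.mpr hnn
    positivity
  have diff_pos : 0 < U' - Ustar :=
    (pos_iff_pos_of_mul_pos (eq28 ▸ rhs_pos)).mpr (sub_pos.mpr hsn)
  exact ⟨eq28, sub_pos.mp diff_pos⟩
end

section
/- Let ι be a nonempty finite index set, Q k > 0 for k ∈ ι, d k ∈ ℝ, and B > 0. Let u₀ = max_k (−d k). Then there exists a unique real number U with U > u₀ such that ∑ k, Q k / (U + d k) = 1 / B. -/
/-! The function `U ↦ ∑ k, Q k / (U + d k)` is continuous and strictly decreasing on `(u₀, ∞)`,
it tends to `+∞` as `U ↓ u₀` (the term whose denominator vanishes at `u₀` blows up, the others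
stay nonnegative) and to `0` as `U → ∞`. By the intermediate value theorem it therefore takes
every positive value, in particular `1 / B`, and by strict monotonicity it does so exactly once. -/

open Filter Set Topology

section SumDivAdd

variable {ι : Type*} [Fintype ι] (Q d : ι → ℝ) {u₀ : ℝ}

theorem strictAntiOn_sum_div_add [Nonempty ι] (hQ : ∀ k, 0 < Q k) (hd : ∀ k, -d k ≤ u₀) :
    StrictAntiOn (fun U => ∑ k, Q k / (U + d k)) (Ioi u₀) := by
  intro x hx y _ hxy
  refine Finset.sum_lt_sum_of_nonempty Finset.univ_nonempty fun k _ => ?_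
  have hxk : -d k < x := (hd k).trans_lt hx
  exact div_lt_div_of_pos_left (hQ k) (by linarith) (by linarith)

theorem continuousOn_sum_div_add (hd : ∀ k, -d k ≤ u₀) :
    ContinuousOn (fun U => ∑ k, Q k / (U + d k)) (Ioi u₀) := by
  refine continuousOn_finsetSum _ fun k _ => continuousOn_const.div (by fun_prop) fun U hU => ?_
  have hUk : -d k < U := (hd k).trans_lt hU
  linarith

theorem tendsto_sum_div_add_atTop :
    Tendsto (fun U => ∑ k, Q k / (U + d k)) atTop (𝓝 0) := by
  simpa using tendsto_finsetSum Finset.univ fun k _ =>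
    tendsto_const_nhds.div_atTop (tendsto_atTop_add_const_right _ (d k) tendsto_id)

theorem tendsto_sum_div_add_nhdsGT (hQ : ∀ k, 0 ≤ Q k) (hd : ∀ k, -d k ≤ u₀) {k₀ : ι}
    (hQk₀ : 0 < Q k₀) (hk₀ : -d k₀ = u₀) :
    Tendsto (fun U => ∑ k, Q k / (U + d k)) (𝓝[>] u₀) atTop := by
  have hden : Tendsto (fun U => U + d k₀) (𝓝[>] u₀) (𝓝[>] 0) := by
    refine tendsto_nhdsWithin_of_tendsto_nhds_of_eventually_within _ ?_ ?_
    · exact ((continuous_add_const (d k₀)).tendsto' u₀ 0 (by linarith)).mono_left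
        nhdsWithin_le_nhds
    · filter_upwards [self_mem_nhdsWithin] with U (hU : u₀ < U)
      exact show 0 < U + d k₀ by linarith
  have hterm : Tendsto (fun U => Q k₀ / (U + d k₀)) (𝓝[>] u₀) atTop := by
    simpa only [div_eq_mul_inv, Function.comp_def] using (tendsto_inv_nhdsGT_zero.comp hden).const_mul_atTop hQk₀
  refine tendsto_atTop_mono' _ ?_ hterm
  filter_upwards [self_mem_nhdsWithin] with U (hU : u₀ < U)
  refine Finset.single_le_sum (f := fun k => Q k / (U + d k)) (fun k _ => ?_) (Finset.mem_univ k₀)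
  have hUk : -d k < U := (hd k).trans_lt hU
  exact div_nonneg (hQ k) (by linarith)

end SumDivAdd

/-- Eq. (5) has a unique real root on the domain where all denominators are positive:
there is exactly one `U > max_k (−d k)` with `∑ k, Q k / (U + d k) = 1 / B`. -/
theorem coSched_root_exists_unique
    {ι : Type*} [Fintype ι] [Nonempty ι]
    (Q : ι → ℝ) (hQ : ∀ k, 0 < Q k) (d : ι → ℝ) (B : ℝ) (hB : 0 < B)
    (u₀ : ℝ) (hu₀ : u₀ = Finset.univ.sup' Finset.univ_nonempty (fun k => -d k)) :
    ∃! U : ℝ, u₀ < U ∧ (∑ k, Q k / (U + d k)) = 1 / B := by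
  have hd : ∀ k, -d k ≤ u₀ := fun k => hu₀ ▸ Finset.le_sup' (fun k => -d k) (Finset.mem_univ k)
  obtain ⟨k₀, -, hk₀⟩ := Finset.exists_mem_eq_sup' Finset.univ_nonempty (fun k => -d k)
  have hanti := strictAntiOn_sum_div_add Q d hQ hd
  have hsurj : Ioi 0 ⊆ (fun U => ∑ k, Q k / (U + d k)) '' Ioi u₀ :=
    isPreconnected_Ioi.intermediate_value_Ioi (l₁ := atTop) (l₂ := 𝓝[>] u₀)
      (le_principal_iff.2 (Ioi_mem_atTop u₀)) inf_le_right (continuousOn_sum_div_add Q d hd)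
      (tendsto_sum_div_add_atTop Q d)
      (tendsto_sum_div_add_nhdsGT Q d (fun k => (hQ k).le) hd (hQ k₀) (hu₀.trans hk₀).symm)
  obtain ⟨U, hU, hfU⟩ := hsurj (one_div_pos.2 hB)
  exact ⟨U, ⟨hU, hfU⟩, fun V hV => hanti.injOn hV.1 hU (hV.2.trans hfU.symm)⟩
end

section
/- Let ι be a nonempty finite index set (analyses in one analysis-only allocation), with Q k > 0 (sequential times) and V k ≥ 0 (received data volumes) for k ∈ ι, and let B > 0, C > 0, n > 0. Set Q = ∑ k, Q k. Suppose U ∈ ℝ satisfies B*Q + U − C*V k > 0 for every k and ∑ k, Q k / (B*Q + U − C*V k) = 1/B. Define c k = B * Q k * C / (B*Q + U − C*V k). Then: (1) c k > 0 for every k; (2) ∑ k, c k = C; (3) ∑ k, c k * V k = U (so U is indeed the remote-processing cost of the allocation); and (4) for every k, Q k / (n * c k) + V k / (B * n) = (B*Q + U) / (B * C * n), i.e., all analyses in the allocation finish each iteration at the same time. -/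
/-! Write `A = B * Q + U` and `d k = A - C * V k`, so that `c k = B * C * Q k / d k`.
Since `C * V k = A - d k`, each term of the cost is `c k * V k = B * (A * Q k / d k - Q k)`;
summing and using `∑ Q k / d k = 1 / B` leaves `A - B * Q = U`. Likewise
`Q k / (n * c k) = d k / (B * C * n)`, and adding `V k / (B * n) = C * V k / (B * C * n)`
turns `d k` back into `A`, which does not depend on `k`. -/

section CoreAllocation

variable {ι : Type*} [Fintype ι]

lemma sum_div_mul_div_sub_eq (Q V : ι → ℝ) (A B C : ℝ) :
    ∑ k, B * Q k * C / (A - C * V k) = B * C * ∑ k, Q k / (A - C * V k) := by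
  rw [Finset.mul_sum]
  exact Finset.sum_congr rfl fun k _ => by ring

lemma div_sub_mul_mul_eq {q v A C : ℝ} (hd : A - C * v ≠ 0) :
    q * C / (A - C * v) * v = A * (q / (A - C * v)) - q := by
  field_simp
  ring

lemma sum_div_mul_div_sub_mul_eq (Q V : ι → ℝ) (A B C : ℝ)
    (hd : ∀ k, A - C * V k ≠ 0) :
    ∑ k, B * Q k * C / (A - C * V k) * V k =
      B * (A * ∑ k, Q k / (A - C * V k) - ∑ k, Q k) := by
  calc ∑ k, B * Q k * C / (A - C * V k) * V k
      = ∑ k, B * (A * (Q k / (A - C * V k)) - Q k) :=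
        Finset.sum_congr rfl fun k _ => by
          rw [← div_sub_mul_mul_eq (hd k)]
          ring
    _ = B * (A * ∑ k, Q k / (A - C * V k) - ∑ k, Q k) := by
        rw [← Finset.mul_sum, Finset.sum_sub_distrib, ← Finset.mul_sum]

end CoreAllocation

lemma div_mul_div_sub_add_eq {q v A B C n : ℝ} (hq : q ≠ 0) (hB : B ≠ 0) (hC : C ≠ 0)
    (hn : n ≠ 0) :
    q / (n * (B * q * C / (A - C * v))) + v / (B * n) = A / (B * C * n) := by
  field_simp
  ring

theorem coSched_analysisOnly_core_allocation_general
    {ι : Type*} [Fintype ι]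
    (Q V : ι → ℝ) (hQ : ∀ k, 0 < Q k)
    (B C n : ℝ) (hB : 0 < B) (hC : 0 < C) (hn : 0 < n)
    (Qtot : ℝ) (hQtot : Qtot = ∑ k, Q k)
    (U : ℝ) (hden : ∀ k, 0 < B * Qtot + U - C * V k)
    (hroot : (∑ k, Q k / (B * Qtot + U - C * V k)) = 1 / B)
    (c : ι → ℝ) (hc : ∀ k, c k = B * Q k * C / (B * Qtot + U - C * V k)) :
    (∀ k, 0 < c k) ∧
    (∑ k, c k) = C ∧
    (∑ k, c k * V k) = U ∧
    (∀ k, Q k / (n * c k) + V k / (B * n) = (B * Qtot + U) / (B * C * n)) := by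
  obtain rfl : c = fun k => B * Q k * C / (B * Qtot + U - C * V k) := funext hc
  have hd : ∀ k, B * Qtot + U - C * V k ≠ 0 := fun k => (hden k).ne'
  refine ⟨fun k => by have := hQ k; have := hden k; positivity, ?_, ?_,
    fun k => div_mul_div_sub_add_eq (hQ k).ne' hB.ne' hC.ne' hn.ne'⟩
  · rw [sum_div_mul_div_sub_eq, hroot]
    field_simp
  · rw [sum_div_mul_div_sub_mul_eq Q V _ B C hd, hroot, ← hQtot]
    field_simp
    ring

/-- Core-level part of Theorem 3 (Eq. (4)): if `U` solves Eq. (5) with positive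
denominators, then the cores `c k = B * Q k * C / (B*Q + U − C*V k)` are positive, sum to
`C`, have remote-processing cost `∑ c k * V k = U`, and equalize all per-iteration times
at `(B*Q + U) / (B * C * n)`. -/
theorem coSched_analysisOnly_core_allocation
    {ι : Type*} [Fintype ι] [Nonempty ι]
    (Q V : ι → ℝ) (hQ : ∀ k, 0 < Q k) (hV : ∀ k, 0 ≤ V k)
    (B C n : ℝ) (hB : 0 < B) (hC : 0 < C) (hn : 0 < n)
    (Qtot : ℝ) (hQtot : Qtot = ∑ k, Q k)
    (U : ℝ) (hden : ∀ k, 0 < B * Qtot + U - C * V k)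
    (hroot : (∑ k, Q k / (B * Qtot + U - C * V k)) = 1 / B)
    (c : ι → ℝ) (hc : ∀ k, c k = B * Q k * C / (B * Qtot + U - C * V k)) :
    (∀ k, 0 < c k) ∧
    (∑ k, c k) = C ∧
    (∑ k, c k * V k) = U ∧
    (∀ k, Q k / (n * c k) + V k / (B * n) = (B * Qtot + U) / (B * C * n)) :=
  coSched_analysisOnly_core_allocation_general Q V hQ B C n hB hC hn Qtot hQtot U hden hroot c hc
end

section
/- Let ι be a finite index set (the analysis-only co-scheduling allocations), with Q i > 0 and U i ≥ 0 for i ∈ ι, let Q_s > 0 (aggregate sequential time of the simulation-based allocations), and let B > 0, C > 0, N > 0. Set Q_nc = ∑ i, Q i, U = ∑ i, U i, and Q_tot = Q_s + Q_nc. Define n i = (B*Q i + U i) * N / (B*Q_tot + U) and Ñ = ∑ i, n i. Then: (1) Ñ = (B*Q_nc + U) * N / (B*Q_tot + U) and Ñ < N; (2) for every i, (B*Q i + U i) / (B * C * n i) = (B*Q_tot + U) / (N * B * C); and (3) Q_s / (C * (N − Ñ)) = (B*Q_tot + U) / (N * B * C); i.e., all allocations have the same equalized per-iteration time (B*Q_tot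 + U)/(N*B*C). -/
/-!
Let `D = B * Q_tot + U`. Every allocation receives nodes in proportion to its bandwidth-weighted
work `B * Q i + U i` (the simulation side: `B * Q_s`), out of a total `D`. A proportional share
`w * N / D` of the nodes processes work `w` in time `w / (k * (w * N / D)) = D / (N * k)`,
independent of `w`; and since `B * Q_s > 0`, the analysis-only shares leave
`N - Ñ = B * Q_s * N / D > 0` nodes to the simulation.
-/

open Finset

theorem sum_proportional_share {ι : Type*} (s : Finset ι) (w : ι → ℝ) (N W : ℝ) :
    ∑ i ∈ s, w i * N / W = (∑ i ∈ s, w i) * N / W := by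
  rw [← sum_div, ← sum_mul]

theorem sub_proportional_share {W N : ℝ} (r : ℝ) (hW : W ≠ 0) :
    N - (W - r) * N / W = r * N / W := by
  field_simp
  ring

theorem div_mul_proportional_share {w k N W : ℝ} (hw : w ≠ 0) (hk : k ≠ 0) (hN : N ≠ 0)
    (hW : W ≠ 0) : w / (k * (w * N / W)) = W / (N * k) := by
  field_simp

/-- Node-level part of Theorem 3 (Eq. (3)): allocating
`n i = (B*Q i + U i) * N / (B*Q_tot + U)` nodes to each analysis-only allocation gives a
total `Ntilde = (B*Q_nc + U) * N / (B*Q_tot + U) < N`, and all allocations (analysis-only and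
simulation-based) have the same equalized per-iteration time `(B*Q_tot + U)/(N*B*C)`. -/
theorem coSched_analysisOnly_node_allocation
    {ι : Type*} [Fintype ι]
    (Q U' : ι → ℝ) (hQ : ∀ i, 0 < Q i) (hU' : ∀ i, 0 ≤ U' i)
    (Qs : ℝ) (hQs : 0 < Qs)
    (B C N : ℝ) (hB : 0 < B) (hC : 0 < C) (hN : 0 < N)
    (Qnc U Qtot : ℝ)
    (hQnc : Qnc = ∑ i, Q i) (hU : U = ∑ i, U' i) (hQtot : Qtot = Qs + Qnc)
    (n : ι → ℝ) (hn : ∀ i, n i = (B * Q i + U' i) * N / (B * Qtot + U))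
    (Ntilde : ℝ) (hNtilde : Ntilde = ∑ i, n i) :
    (Ntilde = (B * Qnc + U) * N / (B * Qtot + U) ∧ Ntilde < N) ∧
    (∀ i, (B * Q i + U' i) / (B * C * n i) = (B * Qtot + U) / (N * B * C)) ∧
    Qs / (C * (N - Ntilde)) = (B * Qtot + U) / (N * B * C) := by
  have hQnc0 : 0 ≤ Qnc := hQnc ▸ sum_nonneg fun i _ => (hQ i).le
  have hU0 : 0 ≤ U := hU ▸ sum_nonneg fun i _ => hU' i
  have hD : 0 < B * Qtot + U := by rw [hQtot]; positivity
  have hNt : Ntilde = (B * Qnc + U) * N / (B * Qtot + U) := by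
    rw [hNtilde, sum_congr rfl fun i _ => hn i, sum_proportional_share, sum_add_distrib,
      ← mul_sum, hQnc, hU]
  have hrest : N - Ntilde = B * Qs * N / (B * Qtot + U) := by
    rw [hNt, ← sub_proportional_share (B * Qs) hD.ne', hQtot]
    ring_nf
  refine ⟨⟨hNt, sub_pos.mp (hrest ▸ by positivity)⟩, fun i => ?_, ?_⟩
  · have hw : B * Q i + U' i ≠ 0 := by have := hQ i; have := hU' i; positivity
    rw [hn i, div_mul_proportional_share hw (by positivity) hN.ne' hD.ne', mul_assoc]
  · rw [hrest, ← mul_div_mul_left Qs _ hB.ne', ← mul_assoc, mul_comm B C,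
      div_mul_proportional_share (by positivity) (by positivity) hN.ne' hD.ne']
    ring
end
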